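/- arXiv:2603.04932 — 5 statements merged into one kernel-verified Lean document; each statement's English description precedes it below -/
import Mathlib

section
/- Let G be a connected simple graph on N vertices (N ≥ 1) with real Laplacian matrix L, and let B be the diagonal matrix whose i-th diagonal entry is μ_i ∈ {0,1}, where μ_i = 1 for at least one vertex i. Then the matrix L + B is positive definite. -/
/-!
Both `L` and `B` are positive semidefinite, so `xᵀ (L + B) x = 0` forces `L x = 0` and `B x = 0`.
On a connected graph the first makes `x` constant, and the second makes it vanish at an informed
vertex.
-/

open Matrix
open scoped ComplexOrder

theorem Matrix.PosSemidef.posDef_add_of_forall_mulVec_eq_zero {𝕜 n : Type*} [RCLike 𝕜]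
    [Fintype n] {A B : Matrix n n 𝕜} (hA : A.PosSemidef) (hB : B.PosSemidef)
    (hAB : ∀ x, A *ᵥ x = 0 → B *ᵥ x = 0 → x = 0) : (A + B).PosDef := by
  rw [posDef_iff_dotProduct_mulVec]
  refine ⟨hA.isHermitian.add hB.isHermitian, fun x hx => ?_⟩
  rw [add_mulVec, dotProduct_add]
  have hAx := hA.dotProduct_mulVec_nonneg x
  have hBx := hB.dotProduct_mulVec_nonneg x
  refine lt_of_le_of_ne (add_nonneg hAx hBx) fun h => hx ?_
  obtain ⟨hA0, hB0⟩ := (add_eq_zero_iff_of_nonneg hAx hBx).1 h.symm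
  exact hAB x ((hA.dotProduct_mulVec_zero_iff x).1 hA0) ((hB.dotProduct_mulVec_zero_iff x).1 hB0)

namespace SimpleGraph

variable {V : Type*} [Fintype V] [DecidableEq V] {G : SimpleGraph V} [DecidableRel G.Adj]

theorem Connected.lapMatrix_mulVec_eq_zero_iff (hG : G.Connected) {x : V → ℝ} :
    G.lapMatrix ℝ *ᵥ x = 0 ↔ ∀ i j, x i = x j := by
  rw [lapMatrix_mulVec_eq_zero_iff_forall_reachable]
  exact ⟨fun h i j => h i j (hG.preconnected i j), fun h i j _ => h i j⟩

theorem Connected.posDef_lapMatrix_add_diagonal (hG : G.Connected) {μ : V → ℝ} (hμ : 0 ≤ μ)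
    (hμ0 : μ ≠ 0) : (G.lapMatrix ℝ + diagonal μ).PosDef := by
  refine (posSemidef_lapMatrix ℝ G).posDef_add_of_forall_mulVec_eq_zero (.diagonal hμ)
    fun x hLx hBx => ?_
  obtain ⟨i, hi⟩ := Function.ne_iff.1 hμ0
  have hxi : x i = 0 := by
    have := congrFun hBx i
    rw [mulVec_diagonal, Pi.zero_apply] at this
    exact (mul_eq_zero.1 this).resolve_left hi
  funext j
  rw [hG.lapMatrix_mulVec_eq_zero_iff.1 hLx j i, hxi, Pi.zero_apply]

end SimpleGraph

theorem lap_plus_informed_posDef_general (N : ℕ)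
    (G : SimpleGraph (Fin N)) [DecidableRel G.Adj] (hG : G.Connected)
    (μ : Fin N → ℝ) (hμ : ∀ i, μ i = 0 ∨ μ i = 1) (hone : ∃ i, μ i = 1) :
    (G.lapMatrix ℝ + Matrix.diagonal μ).PosDef := by
  refine hG.posDef_lapMatrix_add_diagonal (fun i => ?_) fun hμ0 => ?_
  · rcases hμ i with h | h <;> simp [h]
  · obtain ⟨i, hi⟩ := hone
    simp [hμ0] at hi

/-- For a connected simple graph `G` on `N ≥ 1` vertices with real Laplacian matrix `L`,
and an informed matrix `B = diag(μ₁,…,μ_N)` with `μ i ∈ {0,1}` and at least one `μ i = 1`,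
the matrix `L + B` is positive definite. -/
theorem lap_plus_informed_posDef (N : ℕ) (hN : 1 ≤ N)
    (G : SimpleGraph (Fin N)) [DecidableRel G.Adj] (hG : G.Connected)
    (μ : Fin N → ℝ) (hμ : ∀ i, μ i = 0 ∨ μ i = 1) (hone : ∃ i, μ i = 1) :
    (G.lapMatrix ℝ + Matrix.diagonal μ).PosDef :=
  lap_plus_informed_posDef_general N G hG μ hμ hone
end

section
/- Let S and U be real symmetric positive semidefinite n×n matrices, let ζ ≥ 0, let x ∈ ℝⁿ, and set x⁺ = x − ζ(S + U)x. Then ‖x⁺‖² − ‖x‖² ≤ ( ζ²(λmax(U) + λmax(S))² − 2ζ·λmin(S) )·‖x‖², where λmax and λmin denote the largest and smallest eigenvalues. -/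
open Matrix
open scoped Classical

/-- The largest eigenvalue of a (Hermitian) real matrix. -/
noncomputable def lamMax {n : ℕ} (A : Matrix (Fin n) (Fin n) ℝ) : ℝ :=
  if h : A.IsHermitian then ⨆ i, h.eigenvalues i else 0

/-- The smallest eigenvalue of a (Hermitian) real matrix. -/
noncomputable def lamMin {n : ℕ} (A : Matrix (Fin n) (Fin n) ℝ) : ℝ :=
  if h : A.IsHermitian then ⨅ i, h.eigenvalues i else 0

/-!
Expanding the square, `‖x - ζw‖² - ‖x‖² = ζ²‖w‖² - 2ζ⟪x, w⟫` for `w = (S + U)x`. In an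
orthonormal eigenbasis of a symmetric `A`, both `⟪x, Ax⟫` and `‖Ax‖²` are weighted sums of the
squared coordinates of `x`, with weights `λᵢ` and `λᵢ²`. Hence `⟪x, Sx⟫ ≥ λmin(S)‖x‖²`,
`⟪x, Ux⟫ ≥ 0`, and `‖Ax‖ ≤ λmax(A)‖x‖` for `A ⪰ 0`, which bounds `‖w‖` by the triangle inequality.
-/

open scoped RealInnerProductSpace

theorem norm_sub_smul_sq_sub_norm_sq_le {E : Type*} [NormedAddCommGroup E]
    [InnerProductSpace ℝ E] {x w : E} {m M ζ : ℝ} (hζ : 0 ≤ ζ)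
    (hm : m * ‖x‖ ^ 2 ≤ ⟪x, w⟫) (hM : ‖w‖ ≤ M * ‖x‖) :
    ‖x - ζ • w‖ ^ 2 - ‖x‖ ^ 2 ≤ (ζ ^ 2 * M ^ 2 - 2 * ζ * m) * ‖x‖ ^ 2 := by
  have hquad : ζ ^ 2 * ‖w‖ ^ 2 ≤ ζ ^ 2 * (M * ‖x‖) ^ 2 := by gcongr
  have hlin : ζ * (m * ‖x‖ ^ 2) ≤ ζ * ⟪x, w⟫ := mul_le_mul_of_nonneg_left hm hζ
  rw [norm_sub_sq_real, real_inner_smul_right, norm_smul, Real.norm_of_nonneg hζ]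
  linarith

theorem OrthonormalBasis.norm_sq_eq_sum_repr_sq {ι E : Type*} [Fintype ι]
    [NormedAddCommGroup E] [InnerProductSpace ℝ E] (b : OrthonormalBasis ι ℝ E) (x : E) :
    ‖x‖ ^ 2 = ∑ i, b.repr x i ^ 2 := by
  simp only [b.repr_apply_apply, b.sum_sq_inner_right]

namespace Matrix.IsHermitian

variable {ι : Type*} [Fintype ι] [DecidableEq ι] {A : Matrix ι ι ℝ}

theorem eigenvectorBasis_repr_toEuclideanLin (hA : A.IsHermitian) (x : EuclideanSpace ℝ ι)
    (i : ι) :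
    hA.eigenvectorBasis.repr (toEuclideanLin A x) i =
      hA.eigenvalues i * hA.eigenvectorBasis.repr x i := by
  simp only [eigenvectorBasis, eigenvalues, eigenvalues₀, OrthonormalBasis.repr_reindex]
  exact (isSymmetric_toEuclideanLin_iff.mpr hA).eigenvectorBasis_apply_self_apply
    finrank_euclideanSpace x _

theorem inner_toEuclideanLin_eq_sum (hA : A.IsHermitian) (x : EuclideanSpace ℝ ι) :
    ⟪x, toEuclideanLin A x⟫ =
      ∑ i, hA.eigenvalues i * hA.eigenvectorBasis.repr x i ^ 2 := by
  rw [← hA.eigenvectorBasis.repr.inner_map_map, PiLp.inner_apply]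
  refine Finset.sum_congr rfl fun i _ => ?_
  rw [eigenvectorBasis_repr_toEuclideanLin, RCLike.inner_apply, conj_trivial]
  ring

theorem norm_toEuclideanLin_sq_eq_sum (hA : A.IsHermitian) (x : EuclideanSpace ℝ ι) :
    ‖toEuclideanLin A x‖ ^ 2 =
      ∑ i, (hA.eigenvalues i * hA.eigenvectorBasis.repr x i) ^ 2 := by
  simp only [hA.eigenvectorBasis.norm_sq_eq_sum_repr_sq, eigenvectorBasis_repr_toEuclideanLin]

end Matrix.IsHermitian

theorem Matrix.PosSemidef.inner_toEuclideanLin_nonneg {ι : Type*} [Fintype ι] [DecidableEq ι]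
    {A : Matrix ι ι ℝ} (hA : A.PosSemidef) (x : EuclideanSpace ℝ ι) :
    0 ≤ ⟪x, toEuclideanLin A x⟫ := by
  rw [hA.1.inner_toEuclideanLin_eq_sum]
  exact Finset.sum_nonneg fun i _ => mul_nonneg (hA.eigenvalues_nonneg i) (sq_nonneg _)

section Extremal

variable {n : ℕ} {A : Matrix (Fin n) (Fin n) ℝ}

theorem lamMin_le_eigenvalues (hA : A.IsHermitian) (i : Fin n) : lamMin A ≤ hA.eigenvalues i := by
  rw [lamMin, dif_pos hA]
  exact ciInf_le (Set.finite_range _).bddBelow i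

theorem eigenvalues_le_lamMax (hA : A.IsHermitian) (i : Fin n) : hA.eigenvalues i ≤ lamMax A := by
  rw [lamMax, dif_pos hA]
  exact le_ciSup (Set.finite_range _).bddAbove i

theorem lamMax_nonneg (hA : A.PosSemidef) : 0 ≤ lamMax A := by
  rw [lamMax, dif_pos hA.1]
  exact Real.iSup_nonneg hA.eigenvalues_nonneg

theorem lamMin_mul_norm_sq_le_inner (hA : A.IsHermitian) (x : EuclideanSpace ℝ (Fin n)) :
    lamMin A * ‖x‖ ^ 2 ≤ ⟪x, toEuclideanLin A x⟫ := by
  rw [hA.inner_toEuclideanLin_eq_sum, hA.eigenvectorBasis.norm_sq_eq_sum_repr_sq, Finset.mul_sum]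
  exact Finset.sum_le_sum fun i _ =>
    mul_le_mul_of_nonneg_right (lamMin_le_eigenvalues hA i) (sq_nonneg _)

theorem norm_toEuclideanLin_le_lamMax_mul (hA : A.PosSemidef) (x : EuclideanSpace ℝ (Fin n)) :
    ‖toEuclideanLin A x‖ ≤ lamMax A * ‖x‖ := by
  refine le_of_sq_le_sq ?_ (mul_nonneg (lamMax_nonneg hA) (norm_nonneg x))
  rw [hA.1.norm_toEuclideanLin_sq_eq_sum, mul_pow, hA.1.eigenvectorBasis.norm_sq_eq_sum_repr_sq,
    Finset.mul_sum]
  refine Finset.sum_le_sum fun i _ => ?_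
  rw [mul_pow]
  gcongr
  · exact hA.eigenvalues_nonneg i
  · exact eigenvalues_le_lamMax hA.1 i

end Extremal

/-- One-step decrement of the Lyapunov function `V = ‖x‖²` for the adaptive estimator:
for symmetric PSD matrices `S`, `U`, gain `ζ ≥ 0`, and `x⁺ = x − ζ(S + U)x`,
`‖x⁺‖² − ‖x‖² ≤ (ζ²(λmax(U) + λmax(S))² − 2ζ·λmin(S))·‖x‖²`. -/
theorem lyapunov_decrement (n : ℕ) (S U : Matrix (Fin n) (Fin n) ℝ)
    (hS : S.PosSemidef) (hU : U.PosSemidef) (ζ : ℝ) (hζ : 0 ≤ ζ)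
    (x : EuclideanSpace ℝ (Fin n)) :
    ‖x - ζ • (Matrix.toEuclideanLin (S + U) x)‖ ^ 2 - ‖x‖ ^ 2
      ≤ (ζ ^ 2 * (lamMax U + lamMax S) ^ 2 - 2 * ζ * lamMin S) * ‖x‖ ^ 2 := by
  have hsplit : toEuclideanLin (S + U) x = toEuclideanLin S x + toEuclideanLin U x := by
    rw [map_add, LinearMap.add_apply]
  refine norm_sub_smul_sq_sub_norm_sq_le hζ ?_ ?_
  · calc lamMin S * ‖x‖ ^ 2 ≤ ⟪x, toEuclideanLin S x⟫ := lamMin_mul_norm_sq_le_inner hS.1 x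
      _ ≤ ⟪x, toEuclideanLin S x⟫ + ⟪x, toEuclideanLin U x⟫ :=
        le_add_of_nonneg_right (hU.inner_toEuclideanLin_nonneg x)
      _ = ⟪x, toEuclideanLin (S + U) x⟫ := by rw [hsplit, inner_add_right]
  · calc ‖toEuclideanLin (S + U) x‖
        ≤ ‖toEuclideanLin S x‖ + ‖toEuclideanLin U x‖ := hsplit ▸ norm_add_le _ _
      _ ≤ lamMax S * ‖x‖ + lamMax U * ‖x‖ :=
        add_le_add (norm_toEuclideanLin_le_lamMax_mul hS x)
          (norm_toEuclideanLin_le_lamMax_mul hU x)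
      _ = (lamMax U + lamMax S) * ‖x‖ := by ring
end

section
/- Let G be a connected simple graph on N vertices with adjacency coefficients a_ij ∈ {0,1}, let μ_i ∈ {0,1} with μ_i = 1 for at least one vertex i, and for each pair i, j let R_ij be a real 2×2 orthogonal matrix satisfying R_ji = (R_ij)ᵀ. Then the 2N×2N matrix L_R̄ + B ⊗ I₂ is positive definite, where L_R̄ is the block matrix with (i,i) block |N_i|·I₂ (|N_i| the degree of i) and (i,j) block −a_ij·R_ij, and B = diag(μ_1,…,μ_N). Equivalently, for every nonzero family x_1,…,x_N ∈ ℝ², (1/2) Σ_i Σ_j a_ij ‖x_i − R_ij x_j‖² + Σ_i μ_i ‖x_i‖² > 0. -/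
open Matrix Finset
open scoped RealInnerProductSpace Kronecker

/-! Because every `Rᵢⱼ` is an isometry, the quadratic form of `L_R̄ + B ⊗ I₂` at `x` is the
alignment energy `½ Σᵢⱼ aᵢⱼ ‖xᵢ − Rᵢⱼ xⱼ‖² + Σᵢ μᵢ ‖xᵢ‖²`, and `R_ji = R_ijᵀ` makes the matrix
symmetric. The energy is a sum of nonnegative terms. If it vanishes, then `xᵢ = Rᵢⱼ xⱼ` along
every edge, so `‖xᵢ‖` is constant on the connected graph; it is zero at an informed vertex, so
`x = 0`. -/

/-- The attitude Laplacian: the `2N×2N` block matrix whose `(i,i)` diagonal block is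
`|Nᵢ|·I₂` (`|Nᵢ|` the degree of `i`) and whose `(i,j)` off-diagonal block is `−aᵢⱼ·Rᵢⱼ`. -/
def attitudeLap (N : ℕ) (G : SimpleGraph (Fin N)) [DecidableRel G.Adj]
    (R : Fin N → Fin N → Matrix (Fin 2) (Fin 2) ℝ) :
    Matrix (Fin N × Fin 2) (Fin N × Fin 2) ℝ :=
  fun pq rs =>
    if pq.1 = rs.1 then (G.degree pq.1 : ℝ) * (if pq.2 = rs.2 then 1 else 0)
    else -(if G.Adj pq.1 rs.1 then (1 : ℝ) else 0) * R pq.1 rs.1 pq.2 rs.2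

theorem SimpleGraph.Preconnected.apply_eq_of_forall_adj {V α : Type*} {G : SimpleGraph V}
    (hG : G.Preconnected) {f : V → α} (hf : ∀ i j, G.Adj i j → f i = f j) (i j : V) :
    f i = f j := by
  obtain ⟨w⟩ := hG i j
  induction w with
  | nil => rfl
  | cons hadj _ ih => exact (hf _ _ hadj).trans ih

theorem Matrix.norm_toEuclideanLin_of_transpose_mul_self {n : Type*} [Fintype n]
    [DecidableEq n] {A : Matrix n n ℝ} (hA : Aᵀ * A = 1) (v : EuclideanSpace ℝ n) :
    ‖toEuclideanLin A v‖ = ‖v‖ := by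
  have hinner : ⟪toEuclideanLin A v, toEuclideanLin A v⟫ = ⟪v, v⟫ := by
    rw [EuclideanSpace.inner_eq_star_dotProduct, EuclideanSpace.inner_eq_star_dotProduct,
      ofLp_toLpLin, toLin'_apply, star_trivial, star_trivial, dotProduct_mulVec,
      ← vecMul_transpose, vecMul_vecMul, hA, vecMul_one]
  rwa [real_inner_self_eq_norm_sq, real_inner_self_eq_norm_sq,
    sq_eq_sq₀ (norm_nonneg _) (norm_nonneg _)] at hinner

section AlignmentEnergy

variable {V E : Type*} [Fintype V] (G : SimpleGraph V) [DecidableRel G.Adj]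

noncomputable def alignmentEnergy [NormedAddCommGroup E] (f : V → V → E → E) (μ : V → ℝ)
    (x : V → E) : ℝ :=
  (1 / 2) * ∑ i, ∑ j, (if G.Adj i j then (1 : ℝ) else 0) * ‖x i - f i j (x j)‖ ^ 2
    + ∑ i, μ i * ‖x i‖ ^ 2

variable {G}

theorem alignmentEnergy_eq [NormedAddCommGroup E] [InnerProductSpace ℝ E]
    {f : V → V → E → E} (hf : ∀ i j v, ‖f i j v‖ = ‖v‖) (μ : V → ℝ) (x : V → E) :
    alignmentEnergy G f μ x = ∑ i, (G.degree i + μ i) * ‖x i‖ ^ 2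
      - ∑ i, ∑ j, (if G.Adj i j then (1 : ℝ) else 0) * ⟪x i, f i j (x j)⟫ := by
  have hsymm : ∑ i, ∑ j, (if G.Adj i j then (1 : ℝ) else 0) * ‖x j‖ ^ 2
      = ∑ i, ∑ j, (if G.Adj i j then (1 : ℝ) else 0) * ‖x i‖ ^ 2 := by
    rw [sum_comm]
    simp_rw [G.adj_comm]
  simp only [alignmentEnergy, norm_sub_sq_real, hf, mul_add, mul_sub, sum_add_distrib,
    sum_sub_distrib, hsymm, add_mul, G.degree_eq_sum_if_adj, sum_mul,
    mul_left_comm _ (2 : ℝ), ← mul_sum]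
  ring

theorem alignmentEnergy_pos [NormedAddCommGroup E] {f : V → V → E → E} {μ : V → ℝ}
    {x : V → E} (hG : G.Connected) (hf : ∀ i j v, ‖f i j v‖ = ‖v‖) (hμ : ∀ i, 0 ≤ μ i)
    {i₀ : V} (hi₀ : 0 < μ i₀) (hx : x ≠ 0) : 0 < alignmentEnergy G f μ x := by
  have hedge : ∀ i j, 0 ≤ (if G.Adj i j then (1 : ℝ) else 0) * ‖x i - f i j (x j)‖ ^ 2 :=
    fun i j => by positivity
  have hanchor : ∀ i, 0 ≤ μ i * ‖x i‖ ^ 2 := fun i => mul_nonneg (hμ i) (sq_nonneg _)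
  have hedges : 0 ≤ (1 / 2 : ℝ) * ∑ i, ∑ j, (if G.Adj i j then (1 : ℝ) else 0) *
      ‖x i - f i j (x j)‖ ^ 2 :=
    mul_nonneg (by norm_num) (sum_nonneg fun i _ => sum_nonneg fun j _ => hedge i j)
  have hanchors : 0 ≤ ∑ i, μ i * ‖x i‖ ^ 2 := sum_nonneg fun i _ => hanchor i
  refine (add_nonneg hedges hanchors).lt_of_ne fun h => hx ?_
  obtain ⟨hedges₀, hanchors₀⟩ := (add_eq_zero_iff_of_nonneg hedges hanchors).1 h.symm
  simp only [mul_eq_zero, one_div, inv_eq_zero, OfNat.ofNat_ne_zero, false_or,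
    sum_eq_zero_iff_of_nonneg fun i _ => hanchor i,
    sum_eq_zero_iff_of_nonneg fun i _ => sum_nonneg fun j _ => hedge i j,
    sum_eq_zero_iff_of_nonneg fun j _ => hedge _ j, mem_univ, true_implies]
    at hedges₀ hanchors₀
  have hnorm : ∀ i j, G.Adj i j → ‖x i‖ = ‖x j‖ := fun i j hij => by
    have h := hedges₀ i j
    rw [if_pos hij, or_iff_right one_ne_zero, sq_eq_zero_iff, norm_eq_zero, sub_eq_zero] at h
    rw [h, hf]
  have hx₀ : ‖x i₀‖ = 0 := by simpa [hi₀.ne'] using hanchors₀ i₀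
  funext i
  exact norm_eq_zero.1 ((hG.preconnected.apply_eq_of_forall_adj hnorm i i₀).trans hx₀)

end AlignmentEnergy

section AttitudeLaplacian

variable {N : ℕ} {G : SimpleGraph (Fin N)} [DecidableRel G.Adj]
  {R : Fin N → Fin N → Matrix (Fin 2) (Fin 2) ℝ}

theorem attitudeLap_add_kronecker_eq (μ : Fin N → ℝ) :
    attitudeLap N G R + diagonal μ ⊗ₖ (1 : Matrix (Fin 2) (Fin 2) ℝ)
      = diagonal (fun ip => G.degree ip.1 + μ ip.1)
        - of fun ip jq => (if G.Adj ip.1 jq.1 then 1 else 0) * R ip.1 jq.1 ip.2 jq.2 := by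
  ext ⟨i, p⟩ ⟨j, q⟩
  by_cases hij : i = j
  · subst hij
    by_cases hpq : p = q <;> simp [attitudeLap, one_apply, hpq]
  · simp [attitudeLap, hij]

theorem isHermitian_attitudeLap_add_kronecker (hRsym : ∀ i j, R j i = (R i j)ᵀ)
    (μ : Fin N → ℝ) :
    (attitudeLap N G R + diagonal μ ⊗ₖ (1 : Matrix (Fin 2) (Fin 2) ℝ)).IsHermitian := by
  rw [attitudeLap_add_kronecker_eq]
  refine (isHermitian_diagonal _).sub ?_
  ext ⟨i, p⟩ ⟨j, q⟩
  simp [hRsym i j, G.adj_comm]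

theorem dotProduct_attitudeLap_add_kronecker_mulVec (hR : ∀ i j, (R i j)ᵀ * R i j = 1)
    (μ : Fin N → ℝ) (y : Fin N × Fin 2 → ℝ) :
    y ⬝ᵥ ((attitudeLap N G R + diagonal μ ⊗ₖ (1 : Matrix (Fin 2) (Fin 2) ℝ)) *ᵥ y)
      = alignmentEnergy G (fun i j => toEuclideanLin (R i j)) μ
          (fun i => WithLp.toLp 2 fun p => y (i, p)) := by
  rw [alignmentEnergy_eq fun i j => norm_toEuclideanLin_of_transpose_mul_self (hR i j),
    attitudeLap_add_kronecker_eq, sub_mulVec, dotProduct_sub]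
  congr 1
  · simp only [dotProduct, mulVec_diagonal, Fintype.sum_prod_type,
      EuclideanSpace.real_norm_sq_eq, mul_sum]
    exact sum_congr rfl fun i _ => sum_congr rfl fun p _ => by ring
  · simp only [dotProduct, mulVec, Fintype.sum_prod_type, PiLp.inner_apply, ofLp_toLpLin,
      toLin'_apply, of_apply, mul_sum]
    refine sum_congr rfl fun i _ => ?_
    rw [sum_comm]
    refine sum_congr rfl fun j _ => sum_congr rfl fun p _ => ?_
    simp only [RCLike.inner_apply, conj_trivial, mul_sum, sum_mul]
    exact sum_congr rfl fun q _ => by ring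

end AttitudeLaplacian

/-- For a connected simple graph, informed coefficients `μ i ∈ {0,1}` with at least one
`μ i = 1`, and 2×2 orthogonal matrices `R i j` with `R j i = (R i j)ᵀ`, the coupled
information matrix `L_R̄ + B ⊗ I₂` is positive definite; equivalently, for every nonzero
family `x₁,…,x_N ∈ ℝ²`, `(1/2) ΣᵢΣⱼ aᵢⱼ ‖xᵢ − Rᵢⱼ xⱼ‖² + Σᵢ μᵢ ‖xᵢ‖² > 0`. -/
theorem attitude_laplacian_posDef (N : ℕ) (G : SimpleGraph (Fin N))
    [DecidableRel G.Adj] (hG : G.Connected)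
    (μ : Fin N → ℝ) (hμ : ∀ i, μ i = 0 ∨ μ i = 1) (hone : ∃ i, μ i = 1)
    (R : Fin N → Fin N → Matrix (Fin 2) (Fin 2) ℝ)
    (hR : ∀ i j, (R i j)ᵀ * R i j = 1)
    (hRsym : ∀ i j, R j i = (R i j)ᵀ) :
    (attitudeLap N G R + (Matrix.diagonal μ ⊗ₖ (1 : Matrix (Fin 2) (Fin 2) ℝ))).PosDef ∧
    ∀ x : Fin N → EuclideanSpace ℝ (Fin 2), x ≠ 0 →
      0 < (1 / 2) * ∑ i, ∑ j, (if G.Adj i j then (1 : ℝ) else 0) *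
            ‖x i - Matrix.toEuclideanLin (R i j) (x j)‖ ^ 2
          + ∑ i, μ i * ‖x i‖ ^ 2 := by
  have hμ_nonneg : ∀ i, 0 ≤ μ i := fun i => by rcases hμ i with h | h <;> simp [h]
  obtain ⟨i₀, hi₀⟩ := hone
  have hpos : ∀ x : Fin N → EuclideanSpace ℝ (Fin 2), x ≠ 0 →
      0 < alignmentEnergy G (fun i j => toEuclideanLin (R i j)) μ x := fun x hx =>
    alignmentEnergy_pos hG (fun i j => norm_toEuclideanLin_of_transpose_mul_self (hR i j))
      hμ_nonneg (hi₀ ▸ one_pos) hx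
  refine ⟨.of_dotProduct_mulVec_pos (isHermitian_attitudeLap_add_kronecker hRsym μ)
    fun y hy => ?_, hpos⟩
  rw [star_trivial, dotProduct_attitudeLap_add_kronecker_mulVec hR]
  refine hpos _ fun h => hy (funext fun ⟨i, p⟩ => ?_)
  simpa using congr_arg (· p) (congr_fun h i)
end

section
/- Let M be a real symmetric positive definite n×n matrix, let a₁, a₂ ≥ 0, α > 0, C ≥ 0, and let g : ℝ → ℝⁿ. Suppose x : ℝ → ℝⁿ is differentiable and satisfies x'(t) = −M x(t) + g(t) for all t ≥ 0, where ‖g(t)‖ ≤ (a₁‖x(t)‖ + a₂)·C·e^{−αt} for all t ≥ 0. Then x(t) → 0 as t → ∞. -/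
/-!
For `u = ‖x‖²`, coercivity `μ ‖v‖² ≤ ⟪M v, v⟫` (compactness of the unit sphere) and
Cauchy–Schwarz give the scalar inequality `u' ≤ -β u + (c u + d) e^{-αt}` for any rate
`0 < β ≤ 2μ`. Choosing `β < α`, the integrating factor `exp (β t + (c / α) e^{-αt})` makes
`exp (β t + (c / α) e^{-αt}) u + d e^{c/α} / (α - β) · e^{(β - α) t}` nonincreasing on `[0, ∞)`,
whence `u t ≤ e^{c/α} (u 0 + d / (α - β)) e^{-βt} → 0`.
-/

open Real Filter Topology Set
open scoped RealInnerProductSpace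

section InnerProduct
variable {E : Type*} [NormedAddCommGroup E] [InnerProductSpace ℝ E]

theorem LinearMap.exists_pos_mul_norm_sq_le_inner_self [FiniteDimensional ℝ E]
    (T : E →ₗ[ℝ] E) (hT : ∀ v, v ≠ 0 → 0 < ⟪T v, v⟫) :
    ∃ μ > 0, ∀ v, μ * ‖v‖ ^ 2 ≤ ⟪T v, v⟫ := by
  rcases subsingleton_or_nontrivial E with hE | hE
  · exact ⟨1, one_pos, fun v => by simp [Subsingleton.elim v 0]⟩
  have hcont : Continuous fun v => ⟪T v, v⟫ :=
    T.continuous_of_finiteDimensional.inner continuous_id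
  obtain ⟨v₀, hv₀, hmin⟩ := (isCompact_sphere (0 : E) 1).exists_isMinOn
    (NormedSpace.sphere_nonempty.mpr zero_le_one) hcont.continuousOn
  rw [mem_sphere_zero_iff_norm] at hv₀
  refine ⟨_, hT v₀ (norm_ne_zero_iff.mp (by simp [hv₀])), fun v => ?_⟩
  rcases eq_or_ne v 0 with rfl | hv
  · simp
  have hw : ‖v‖⁻¹ • v ∈ Metric.sphere (0 : E) 1 := by simp [norm_smul, hv]
  have hmin_v : ⟪T v₀, v₀⟫ ≤ ⟪T (‖v‖⁻¹ • v), ‖v‖⁻¹ • v⟫ := hmin hw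
  simp only [map_smul, real_inner_smul_left, real_inner_smul_right,
    ← mul_assoc, ← sq, inv_pow] at hmin_v
  rwa [inv_mul_eq_div, le_div_iff₀ (by positivity)] at hmin_v

theorem two_mul_inner_neg_add_le {x w y : E} {μ a₁ a₂ b : ℝ} (hw : μ * ‖x‖ ^ 2 ≤ ⟪w, x⟫)
    (hy : ‖y‖ ≤ (a₁ * ‖x‖ + a₂) * b) (ha₂ : 0 ≤ a₂) (hb : 0 ≤ b) :
    2 * ⟪x, -w + y⟫ ≤ -(2 * μ) * ‖x‖ ^ 2 + ((2 * a₁ + a₂) * ‖x‖ ^ 2 + a₂) * b := by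
  have hyx : ⟪x, y⟫ ≤ (a₁ * ‖x‖ + a₂) * b * ‖x‖ :=
    (real_inner_le_norm x y).trans (by rw [mul_comm]; gcongr)
  -- `2 r ≤ r² + 1` absorbs the term linear in `‖x‖`.
  have hlin : 0 ≤ a₂ * b * (‖x‖ - 1) ^ 2 := by positivity
  rw [inner_add_right, inner_neg_right, real_inner_comm]
  nlinarith

end InnerProduct

theorem Matrix.PosDef.inner_toEuclideanLin_self_pos {ι : Type*} [Fintype ι] [DecidableEq ι]
    {M : Matrix ι ι ℝ} (hM : M.PosDef) {v : EuclideanSpace ℝ ι} (hv : v ≠ 0) :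
    0 < ⟪Matrix.toEuclideanLin M v, v⟫ := by
  have := hM.dotProduct_mulVec_pos (x := v.ofLp) (by simpa using hv)
  simpa [Matrix.toEuclideanLin, inner, dotProduct, Matrix.mulVec, mul_comm] using this

section LinearDifferentialInequality
variable {u u' : ℝ → ℝ} {α β c d : ℝ}

theorem hasDerivAt_mul_add_div_mul_exp_neg_mul (hα : α ≠ 0) (t : ℝ) :
    HasDerivAt (fun s => β * s + c / α * exp (-α * s)) (β - c * exp (-α * t)) t := by
  have hlin : HasDerivAt (fun s => β * s) β t := by
    simpa using (hasDerivAt_id t).const_mul β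
  have hexp : HasDerivAt (fun s => exp (-α * s)) (exp (-α * t) * -α) t := by
    simpa using ((hasDerivAt_id t).const_mul (-α)).exp
  exact (hlin.add (hexp.const_mul (c / α))).congr_deriv (by field_simp; ring)

theorem antitoneOn_exp_mul_add_of_deriv_le (hα : 0 < α) (hαβ : α ≠ β) (hc : 0 ≤ c) (hd : 0 ≤ d)
    (hu : ∀ t ≥ 0, HasDerivAt u (u' t) t)
    (hu' : ∀ t ≥ 0, u' t ≤ -β * u t + (c * u t + d) * exp (-α * t)) :
    AntitoneOn (fun t => exp (β * t + c / α * exp (-α * t)) * u t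
      + d * exp (c / α) / (α - β) * exp ((β - α) * t)) (Ici 0) := by
  set p : ℝ → ℝ := fun t => β * t + c / α * exp (-α * t)
  have hφ : ∀ t ≥ 0, HasDerivAt (fun t => exp (p t) * u t
      + d * exp (c / α) / (α - β) * exp ((β - α) * t))
      (exp (p t) * ((β - c * exp (-α * t)) * u t + u' t)
        - d * exp (c / α) * exp ((β - α) * t)) t := by
    intro t ht
    have hexp : HasDerivAt (fun s => exp ((β - α) * s)) (exp ((β - α) * t) * (β - α)) t := by
      simpa using ((hasDerivAt_id t).const_mul (β - α)).exp
    refine ((((hasDerivAt_mul_add_div_mul_exp_neg_mul hα.ne' t).exp).mul (hu t ht)).add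
      (hexp.const_mul _)).congr_deriv ?_
    simp only [p]
    field_simp [sub_ne_zero.mpr hαβ]
    ring
  refine antitoneOn_of_hasDerivWithinAt_nonpos (convex_Ici 0)
    (fun t ht => (hφ t ht).continuousAt.continuousWithinAt)
    (fun t ht => (hφ t (interior_subset ht)).hasDerivWithinAt) (fun t ht => ?_)
  rw [interior_Ici, mem_Ioi] at ht
  have hp : exp (p t) * exp (-α * t) ≤ exp (c / α) * exp ((β - α) * t) := by
    rw [← exp_add, ← exp_add, exp_le_exp]
    have : exp (-α * t) ≤ 1 := exp_le_one_iff.mpr (by nlinarith)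
    have : c / α * exp (-α * t) ≤ c / α := mul_le_of_le_one_right (by positivity) this
    simp only [p]
    linarith
  have hineq : (β - c * exp (-α * t)) * u t + u' t ≤ d * exp (-α * t) := by
    nlinarith [hu' t ht.le]
  have h₁ := mul_le_mul_of_nonneg_left hineq (exp_pos (p t)).le
  have h₂ := mul_le_mul_of_nonneg_left hp hd
  linarith

theorem le_exp_mul_exp_neg_mul_of_deriv_le (hα : 0 < α) (hβα : β < α) (hc : 0 ≤ c) (hd : 0 ≤ d)
    (hu : ∀ t ≥ 0, HasDerivAt u (u' t) t) (hu₀ : ∀ t ≥ 0, 0 ≤ u t)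
    (hu' : ∀ t ≥ 0, u' t ≤ -β * u t + (c * u t + d) * exp (-α * t)) {t : ℝ} (ht : 0 ≤ t) :
    u t ≤ exp (c / α) * (u 0 + d / (α - β)) * exp (-β * t) := by
  have hanti := antitoneOn_exp_mul_add_of_deriv_le hα hβα.ne' hc hd hu hu' self_mem_Ici ht ht
  have hweight : exp (β * t) * u t ≤ exp (β * t + c / α * exp (-α * t)) * u t := by
    gcongr
    · exact hu₀ t ht
    · have : 0 ≤ c / α * exp (-α * t) := by positivity
      linarith
  have htail : 0 ≤ d * exp (c / α) / (α - β) * exp ((β - α) * t) := by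
    have : 0 < α - β := sub_pos.mpr hβα
    positivity
  have hbound : exp (β * t) * u t ≤ exp (c / α) * (u 0 + d / (α - β)) := by
    simp only [mul_zero, zero_add, exp_zero, mul_one] at hanti
    linarith [show d * exp (c / α) / (α - β) = exp (c / α) * (d / (α - β)) by ring]
  calc u t = exp (-β * t) * (exp (β * t) * u t) := by
        rw [← mul_assoc, ← exp_add]
        simp
    _ ≤ exp (-β * t) * (exp (c / α) * (u 0 + d / (α - β))) := by gcongr
    _ = _ := mul_comm _ _

theorem tendsto_zero_of_deriv_le_neg_mul_add_exp (hβ : 0 < β) (hβα : β < α) (hc : 0 ≤ c)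
    (hd : 0 ≤ d) (hu : ∀ t ≥ 0, HasDerivAt u (u' t) t) (hu₀ : ∀ t ≥ 0, 0 ≤ u t)
    (hu' : ∀ t ≥ 0, u' t ≤ -β * u t + (c * u t + d) * exp (-α * t)) :
    Tendsto u atTop (𝓝 0) := by
  have hdecay : Tendsto (fun t => exp (-β * t)) atTop (𝓝 0) :=
    tendsto_exp_atBot.comp (tendsto_id.const_mul_atTop_of_neg (neg_lt_zero.mpr hβ))
  refine squeeze_zero' (eventually_ge_atTop 0 |>.mono hu₀)
    (eventually_ge_atTop 0 |>.mono fun t ht =>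
      le_exp_mul_exp_neg_mul_of_deriv_le (hβ.trans hβα) hβα hc hd hu hu₀ hu' ht) ?_
  simpa using hdecay.const_mul (exp (c / α) * (u 0 + d / (α - β)))

end LinearDifferentialInequality

/-- Vanishing perturbation with state-dependent bound: if `M` is symmetric positive
definite, `x'(t) = −M x(t) + g(t)` for all `t ≥ 0` with
`‖g(t)‖ ≤ (a₁‖x(t)‖ + a₂)·C·e^{−αt}`, then `x(t) → 0` as `t → ∞`. -/
theorem perturbed_system_state_dependent_tendsto_zero (n : ℕ)
    (M : Matrix (Fin n) (Fin n) ℝ) (hM : M.PosDef)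
    (a₁ a₂ α C : ℝ) (ha₁ : 0 ≤ a₁) (ha₂ : 0 ≤ a₂) (hα : 0 < α) (hC : 0 ≤ C)
    (g : ℝ → EuclideanSpace ℝ (Fin n))
    (x : ℝ → EuclideanSpace ℝ (Fin n))
    (hx : Differentiable ℝ x)
    (hode : ∀ t : ℝ, 0 ≤ t →
      deriv x t = -(Matrix.toEuclideanLin M (x t)) + g t)
    (hg : ∀ t : ℝ, 0 ≤ t →
      ‖g t‖ ≤ (a₁ * ‖x t‖ + a₂) * C * Real.exp (-α * t)) :
    Filter.Tendsto x Filter.atTop (nhds 0) := by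
  obtain ⟨μ, hμ, hcoer⟩ := (Matrix.toEuclideanLin M).exists_pos_mul_norm_sq_le_inner_self
    fun v hv => hM.inner_toEuclideanLin_self_pos hv
  set β := min (2 * μ) (α / 2)
  have hβ : 0 < β := lt_min (by linarith) (by linarith)
  have hβα : β < α := (min_le_right _ _).trans_lt (by linarith)
  have hu : ∀ t ≥ 0, HasDerivAt (fun s => ‖x s‖ ^ 2)
      (2 * ⟪x t, -(Matrix.toEuclideanLin M (x t)) + g t⟫) t :=
    fun t ht => hode t ht ▸ (hx t).hasDerivAt.norm_sq
  have hu' : ∀ t ≥ 0, 2 * ⟪x t, -(Matrix.toEuclideanLin M (x t)) + g t⟫ ≤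
      -β * ‖x t‖ ^ 2 + ((2 * a₁ + a₂) * C * ‖x t‖ ^ 2 + a₂ * C) * exp (-α * t) := by
    intro t ht
    have hinner := two_mul_inner_neg_add_le (hcoer (x t))
      (by simpa only [mul_assoc] using hg t ht) ha₂ (by positivity : 0 ≤ C * exp (-α * t))
    have hrate : -(2 * μ) * ‖x t‖ ^ 2 ≤ -β * ‖x t‖ ^ 2 := by
      gcongr
      exact min_le_left _ _
    linarith
  have hsq := tendsto_zero_of_deriv_le_neg_mul_add_exp hβ hβα (by positivity) (by positivity)
    hu (fun t _ => sq_nonneg ‖x t‖) hu'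
  exact tendsto_zero_iff_norm_tendsto_zero.mpr (by simpa using hsq.sqrt)
end

section
/- Let G be a connected simple graph on N vertices with real Laplacian matrix L, let B = diag(μ_1,…,μ_N) with μ_i ∈ {0,1} and μ_i = 1 for at least one i, let α > 0, C ≥ 0, and let Ξ : ℝ → ℝ^{3N} satisfy ‖Ξ(t)‖ ≤ C·e^{−αt} for all t ≥ 0. Suppose p̃ : ℝ → ℝ^{3N} is differentiable and satisfies p̃'(t) = −((L + B) ⊗ I₃) p̃(t) + Ξ(t) for all t ≥ 0, where ⊗ denotes the Kronecker product and I₃ the 3×3 identity matrix. Then p̃(t) → 0 as t → ∞. -/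
/-!
Connectedness makes the Laplacian form vanish only on constant vectors, and a single informed
robot kills those, so `L + B`, and with it `(L + B) ⊗ I₃`, is positive definite: by compactness of
the unit sphere, `⟪x, ((L + B) ⊗ I₃) x⟫ ≥ c ‖x‖²` for some `c > 0`. Young's inequality then gives
`V' ≤ -c V + ‖Ξ‖² / c` for `V = ‖p̃‖²`, and Grönwall's inequality, started once the forcing is
below `c ε / 2`, keeps `V` eventually below `ε`.
-/

open Matrix
open Filter Topology Real
open scoped Kronecker RealInnerProductSpace

theorem exists_pos_mul_norm_sq_le_inner {E : Type*} [NormedAddCommGroup E]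
    [InnerProductSpace ℝ E] [FiniteDimensional ℝ E] (T : E →ₗ[ℝ] E)
    (hT : ∀ x, x ≠ 0 → 0 < ⟪x, T x⟫) : ∃ c > 0, ∀ x, c * ‖x‖ ^ 2 ≤ ⟪x, T x⟫ := by
  rcases subsingleton_or_nontrivial E with hE | hE
  · exact ⟨1, one_pos, fun x => by simp [Subsingleton.elim x 0]⟩
  have hcont : Continuous fun x => ⟪x, T x⟫ :=
    continuous_id.inner T.continuous_of_finiteDimensional
  obtain ⟨x₀, hx₀, hmin⟩ := (isCompact_sphere (0 : E) 1).exists_isMinOn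
    (NormedSpace.sphere_nonempty.2 zero_le_one) hcont.continuousOn
  refine ⟨⟪x₀, T x₀⟫, hT x₀ (ne_zero_of_mem_unit_sphere ⟨x₀, hx₀⟩), fun x => ?_⟩
  rcases eq_or_ne x 0 with rfl | hx
  · simp
  have hmin_x : ⟪x₀, T x₀⟫ ≤ ‖x‖⁻¹ * (‖x‖⁻¹ * ⟪x, T x⟫) := by
    simpa [map_smul, real_inner_smul_left, real_inner_smul_right] using
      hmin (show ‖x‖⁻¹ • x ∈ Metric.sphere (0 : E) 1 by simp [norm_smul, hx])
  calc ⟪x₀, T x₀⟫ * ‖x‖ ^ 2 ≤ ‖x‖⁻¹ * (‖x‖⁻¹ * ⟪x, T x⟫) * ‖x‖ ^ 2 := by gcongr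
    _ = ⟪x, T x⟫ := by field_simp

theorem Matrix.PosDef.exists_pos_mul_norm_sq_le_inner {n : Type*} [Fintype n] [DecidableEq n]
    {A : Matrix n n ℝ} (hA : A.PosDef) :
    ∃ c > 0, ∀ x : EuclideanSpace ℝ n, c * ‖x‖ ^ 2 ≤ ⟪x, toEuclideanLin A x⟫ :=
  _root_.exists_pos_mul_norm_sq_le_inner _ fun x hx => by
    rw [EuclideanSpace.inner_eq_star_dotProduct, toLpLin_apply, dotProduct_comm]
    exact hA.dotProduct_mulVec_pos (by simpa using hx)

theorem SimpleGraph.posDef_lapMatrix_add_diagonal {V : Type*} [Fintype V] [DecidableEq V]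
    (G : SimpleGraph V) [DecidableRel G.Adj] (hG : G.Connected) {μ : V → ℝ} (hμ : 0 ≤ μ)
    {i₀ : V} (hi₀ : 0 < μ i₀) : (G.lapMatrix ℝ + diagonal μ).PosDef := by
  have hL := G.posSemidef_lapMatrix ℝ
  have hD : (diagonal μ).PosSemidef := posSemidef_diagonal_iff.2 hμ
  refine .of_dotProduct_mulVec_pos (hL.isHermitian.add hD.isHermitian) fun x hx => ?_
  have hLx := hL.dotProduct_mulVec_nonneg x
  have hDx := hD.dotProduct_mulVec_nonneg x
  rw [add_mulVec, dotProduct_add]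
  refine (add_nonneg hLx hDx).lt_of_ne' fun h0 => hx ?_
  obtain ⟨hLx0, hDx0⟩ := (add_eq_zero_iff_of_nonneg hLx hDx).1 h0
  have hconst : ∀ i, x i = x i₀ := fun i =>
    (G.lapMatrix_toLinearMap₂'_apply'_eq_zero_iff_forall_reachable x).1
      (by simpa [toLinearMap₂'_apply'] using hLx0) i i₀ (hG.preconnected i i₀)
  have hterm : μ i₀ * x i₀ ^ 2 = 0 := by
    simp only [star_trivial, mulVec_diagonal, dotProduct] at hDx0
    have hterm_nonneg : ∀ i ∈ Finset.univ, 0 ≤ x i * (μ i * x i) := fun i _ => by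
      nlinarith [mul_nonneg (hμ i) (mul_self_nonneg (x i))]
    linear_combination (Finset.sum_eq_zero_iff_of_nonneg hterm_nonneg).1 hDx0 i₀ (Finset.mem_univ _)
  have hx₀ : x i₀ = 0 := by simpa [hi₀.ne'] using hterm
  exact funext fun i => (hconst i).trans hx₀

theorem tendsto_zero_of_hasDerivAt_le_neg_mul_add {g g' f : ℝ → ℝ} {c : ℝ} (hc : 0 < c)
    (hg : ∀ t, HasDerivAt g (g' t) t) (hg_nonneg : ∀ t, 0 ≤ g t)
    (hle : ∀ᶠ t in atTop, g' t ≤ -c * g t + f t) (hf : Tendsto f atTop (𝓝 0)) :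
    Tendsto g atTop (𝓝 0) := by
  refine tendsto_order.2 ⟨fun a ha => .of_forall fun t => ha.trans_le (hg_nonneg t),
    fun ε hε => ?_⟩
  obtain ⟨T, hT⟩ := eventually_atTop.1
    (hle.and (hf.eventually (eventually_le_nhds (half_pos (mul_pos hc hε)))))
  -- Grönwall from time `T`, where the forcing is at most `c ε / 2`
  have hbound : ∀ t ≥ T, g t ≤ g T * exp (-c * (t - T)) + ε / 2 := by
    intro t ht
    have hgron := le_gronwallBound_of_liminf_deriv_right_le (b := t)
      (fun x _ => (hg x).continuousAt.continuousWithinAt)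
      (fun x _ r hr => (hg x).hasDerivWithinAt.liminf_right_slope_le hr) le_rfl
      (fun x hx => (hT x hx.1).1.trans (add_le_add_right (hT x hx.1).2 _)) t ⟨ht, le_rfl⟩
    rw [gronwallBound_of_K_ne_0 (neg_ne_zero.2 hc.ne')] at hgron
    have hK : c * ε / 2 / -c = -(ε / 2) := by field_simp
    rw [hK] at hgron
    nlinarith [exp_pos (-c * (t - T))]
  have hdecay : Tendsto (fun t => g T * exp (-c * (t - T)) + ε / 2) atTop (𝓝 (ε / 2)) := by
    have hexp := tendsto_exp_atBot.comp
      ((tendsto_atTop_add_const_right atTop (-T) tendsto_id).const_mul_atTop_of_neg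
        (neg_neg_of_pos hc))
    simpa [sub_eq_add_neg] using (hexp.const_mul (g T)).add_const (ε / 2)
  filter_upwards [eventually_ge_atTop T, hdecay.eventually (gt_mem_nhds (half_lt_self hε))]
    with t ht hlt
  exact (hbound t ht).trans_lt hlt

theorem tendsto_zero_of_deriv_eq_neg_apply_add {E : Type*} [NormedAddCommGroup E]
    [InnerProductSpace ℝ E] {T : E →ₗ[ℝ] E} {c : ℝ} (hc : 0 < c)
    (hT : ∀ x, c * ‖x‖ ^ 2 ≤ ⟪x, T x⟫) {p Ξ : ℝ → E} (hp : Differentiable ℝ p)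
    (hode : ∀ᶠ t in atTop, deriv p t = -T (p t) + Ξ t) (hΞ : Tendsto Ξ atTop (𝓝 0)) :
    Tendsto p atTop (𝓝 0) := by
  have hforcing : Tendsto (fun t => c⁻¹ * ‖Ξ t‖ ^ 2) atTop (𝓝 0) := by
    simpa using (hΞ.norm.pow 2).const_mul c⁻¹
  have hsq : Tendsto (fun t => ‖p t‖ ^ 2) atTop (𝓝 0) := by
    refine tendsto_zero_of_hasDerivAt_le_neg_mul_add hc (fun t => (hp t).hasDerivAt.norm_sq)
      (fun t => sq_nonneg _) ?_ hforcing
    filter_upwards [hode] with t ht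
    rw [ht, inner_add_right, inner_neg_right]
    have hcoer := hT (p t)
    have hcs := real_inner_le_norm (p t) (Ξ t)
    -- Young: `2 a b ≤ c a² + b² / c`
    have hyoung : 0 ≤ c⁻¹ * (c * ‖p t‖ - ‖Ξ t‖) ^ 2 := by positivity
    have hcc : c⁻¹ * c = 1 := inv_mul_cancel₀ hc.ne'
    nlinarith
  rw [tendsto_zero_iff_norm_tendsto_zero]
  simpa using hsq.sqrt

theorem position_estimator_convergence_general (N : ℕ)
    (G : SimpleGraph (Fin N)) [DecidableRel G.Adj] (hG : G.Connected)
    (μ : Fin N → ℝ) (hμ : ∀ i, μ i = 0 ∨ μ i = 1) (hone : ∃ i, μ i = 1)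
    (α C : ℝ) (hα : 0 < α)
    (Ξ : ℝ → EuclideanSpace ℝ (Fin N × Fin 3))
    (hΞ : ∀ t : ℝ, 0 ≤ t → ‖Ξ t‖ ≤ C * Real.exp (-α * t))
    (p : ℝ → EuclideanSpace ℝ (Fin N × Fin 3))
    (hp : Differentiable ℝ p)
    (hode : ∀ t : ℝ, 0 ≤ t →
      deriv p t =
        -(Matrix.toEuclideanLin
            ((G.lapMatrix ℝ + Matrix.diagonal μ) ⊗ₖ (1 : Matrix (Fin 3) (Fin 3) ℝ))
            (p t)) + Ξ t) :
    Filter.Tendsto p Filter.atTop (nhds 0) := by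
  have hμ_nonneg : 0 ≤ μ := fun i => by rcases hμ i with h | h <;> simp [h]
  obtain ⟨i₀, hi₀⟩ := hone
  have hM : (G.lapMatrix ℝ + diagonal μ).PosDef :=
    G.posDef_lapMatrix_add_diagonal hG hμ_nonneg (hi₀ ▸ one_pos)
  obtain ⟨c, hc, hcoer⟩ :=
    (hM.kronecker (PosDef.one (n := Fin 3))).exists_pos_mul_norm_sq_le_inner
  have hdecay : Tendsto (fun t => C * exp (-α * t)) atTop (𝓝 0) := by
    simpa using (tendsto_exp_neg_atTop_nhds_zero.comp
      (tendsto_id.const_mul_atTop hα)).const_mul C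
  have hΞ_lim : Tendsto Ξ atTop (𝓝 0) :=
    squeeze_zero_norm' ((eventually_ge_atTop 0).mono hΞ) hdecay
  exact tendsto_zero_of_deriv_eq_neg_apply_add hc hcoer hp ((eventually_ge_atTop 0).mono hode)
    hΞ_lim

/-- Position part of the distributed coupled estimator: for a connected simple graph with
Laplacian `L`, informed matrix `B = diag(μ₁,…,μ_N)` with `μ i ∈ {0,1}` and some `μ i = 1`,
and an exponentially decaying perturbation `Ξ`, any differentiable solution of
`p̃'(t) = −((L + B) ⊗ I₃) p̃(t) + Ξ(t)` on `t ≥ 0` converges to `0`. -/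
theorem position_estimator_convergence (N : ℕ)
    (G : SimpleGraph (Fin N)) [DecidableRel G.Adj] (hG : G.Connected)
    (μ : Fin N → ℝ) (hμ : ∀ i, μ i = 0 ∨ μ i = 1) (hone : ∃ i, μ i = 1)
    (α C : ℝ) (hα : 0 < α) (hC : 0 ≤ C)
    (Ξ : ℝ → EuclideanSpace ℝ (Fin N × Fin 3))
    (hΞ : ∀ t : ℝ, 0 ≤ t → ‖Ξ t‖ ≤ C * Real.exp (-α * t))
    (p : ℝ → EuclideanSpace ℝ (Fin N × Fin 3))
    (hp : Differentiable ℝ p)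
    (hode : ∀ t : ℝ, 0 ≤ t →
      deriv p t =
        -(Matrix.toEuclideanLin
            ((G.lapMatrix ℝ + Matrix.diagonal μ) ⊗ₖ (1 : Matrix (Fin 3) (Fin 3) ℝ))
            (p t)) + Ξ t) :
    Filter.Tendsto p Filter.atTop (nhds 0) :=
  position_estimator_convergence_general N G hG μ hμ hone α C hα Ξ hΞ p hp hode
end
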